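/- Let G be a 0/1-edge-weighted graph, M a perfect matching in G, and e = {u,v} ∈ M. Let G' = G − e (edge deletion) with matching M' = M \ {e}, where additionally, if e has weight 1, the weight of every edge incident to u in G' is flipped (0 ↔ 1). Then G has an M-alternating cycle of odd weight through e if and only if G' has an M'-augmenting path of odd weight. -/

import Mathlib

open scoped Classical

def PerfM {V : Type*} (G : SimpleGraph V) (M : Set (Sym2 V)) : Prop :=
  M ⊆ G.edgeSet ∧ ∀ v : V, ∃! e, e ∈ M ∧ v ∈ e

def AltList {V : Type*} (M : Set (Sym2 V)) (l : List (Sym2 V)) : Prop :=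
  l.Chain' fun e f => (e ∈ M ↔ f ∉ M)

def AltCycle {V : Type*} (G : SimpleGraph V) (M : Set (Sym2 V)) {x : V}
    (c : G.Walk x x) : Prop :=
  c.IsCycle ∧ AltList M c.edges ∧
    ∀ h : c.edges ≠ [], (c.edges.getLast h ∈ M ↔ c.edges.head h ∉ M)

/-!
Let `e = s(u, v)`. Up to rotation and reversal, an `M`-alternating cycle through `e` has edge list
`e :: r` with `r` a path between `u` and `v` avoiding `e`. As `M` is perfect, `e` is the only
matching edge at `u` and at `v`, so `r` starts and ends with non-matching edges: `r` is exactly an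
`M \ {e}`-augmenting path of `G - e`, and conversely the only `M \ {e}`-exposed vertices are `u` and
`v`, so every augmenting path closes up with `e` to such a cycle. For the weights, `r` has exactly
one edge at `u`, so flipping the weights at `u` when `w e = 1` gives `w'(r) ≡ w(r) + w(e)` mod 2,
which is the weight of the cycle.
-/

theorem Cycle.chain_coe_cons_iff {α : Type*} (r : α → α → Prop) (a : α) {l : List α}
    (hl : l ≠ []) :
    Cycle.Chain r ↑(a :: l) ↔ r a (l.head hl) ∧ l.IsChain r ∧ r (l.getLast hl) a := by
  obtain ⟨b, t, rfl⟩ := List.exists_cons_of_ne_nil hl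
  rw [Cycle.chain_coe_cons, List.cons_append, List.isChain_cons_cons, ← List.cons_append,
    List.isChain_append]
  simp [List.getLast?_eq_some_getLast (List.cons_ne_nil b t)]

theorem List.sum_map_ite_sub_modEq {α : Type*} (P : α → Prop) [DecidablePred P]
    (w : α → ℕ) (l : List α) (hw : ∀ x ∈ l, w x ≤ 1) :
    (l.map fun x => if P x then 1 - w x else w x).sum ≡
      (l.map w).sum + l.countP (P ·) [MOD 2] := by
  induction l with
  | nil => rfl
  | cons x l ih =>
    have hx := hw x (by simp)
    have ih := ih fun y hy => hw y (by simp [hy])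
    unfold Nat.ModEq at ih ⊢
    simp only [List.map_cons, List.sum_cons, List.countP_cons]
    split_ifs <;> simp_all <;> omega

section Alternation

variable {V : Type*} {M N : Set (Sym2 V)}

theorem altList_iff_of_forall_mem {l : List (Sym2 V)} (h : ∀ x ∈ l, x ∈ M ↔ x ∈ N) :
    AltList M l ↔ AltList N l :=
  List.IsChain.iff_of_mem_imp fun x y hx hy => by rw [h x hx, h y hy]

theorem altList_and_iff_cycleChain {l : List (Sym2 V)} :
    (AltList M l ∧ ∀ h : l ≠ [], (l.getLast h ∈ M ↔ l.head h ∉ M)) ↔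
      Cycle.Chain (fun e f => e ∈ M ↔ f ∉ M) (l : Cycle (Sym2 V)) := by
  rcases eq_or_ne l [] with rfl | hl
  · exact iff_of_true ⟨List.isChain_nil, fun h => absurd rfl h⟩ (Cycle.Chain.nil _)
  rw [Cycle.chain_ne_nil _ hl, List.isChain_cons, List.head?_eq_some_head hl]
  simp only [Option.mem_def, Option.some.injEq, forall_eq', AltList]
  exact ⟨fun h => ⟨h.2 hl, h.1⟩, fun h => ⟨h.2, fun _ => h.1⟩⟩

/- Alternation around a closed walk is `Cycle.Chain` of the alternation relation on its edges,
which is invariant under rotating the edge list. -/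
theorem altCycle_iff {G : SimpleGraph V} {x : V} {c : G.Walk x x} :
    AltCycle G M c ↔
      c.IsCycle ∧ Cycle.Chain (fun e f => e ∈ M ↔ f ∉ M) (c.edges : Cycle (Sym2 V)) := by
  rw [AltCycle, ← altList_and_iff_cycleChain]

end Alternation

namespace SimpleGraph

variable {V : Type*} {G : SimpleGraph V} {a b u v : V}

theorem Walk.IsPath.countP_start_mem_edges [DecidableEq V] {p : G.Walk a b} (hp : p.IsPath)
    (hab : a ≠ b) :
    p.edges.countP (a ∈ ·) = 1 := by
  cases p with
  | nil => exact absurd rfl hab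
  | cons h q =>
    have ha : a ∉ q.support := ((Walk.cons_isPath_iff h q).mp hp).2
    rw [Walk.edges_cons, List.countP_cons_of_pos (by simp), List.countP_eq_zero.mpr]
    exact fun f hf haf => ha (Walk.mem_support_of_mem_edges hf (of_decide_eq_true haf))

theorem Walk.IsPath.countP_end_mem_edges [DecidableEq V] {p : G.Walk a b} (hp : p.IsPath)
    (hab : a ≠ b) :
    p.edges.countP (b ∈ ·) = 1 := by
  simpa [Walk.edges_reverse] using hp.reverse.countP_start_mem_edges hab.symm

theorem Walk.IsCycle.snd_eq_or_penultimate_eq {c : G.Walk u u} (hc : c.IsCycle)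
    (he : s(u, v) ∈ c.edges) : c.snd = v ∨ c.penultimate = v := by
  cases c with
  | nil => simp at he
  | cons h q =>
    rcases List.mem_cons.mp (Walk.edges_cons h q ▸ he) with he | he
    · exact .inl ((Walk.snd_cons q h).trans (Sym2.congr_right.mp he).symm)
    · have hq := ((Walk.cons_isCycle_iff q h).mp hc).1
      have hnil : ¬q.Nil := fun hn => by simp [Walk.edges_eq_nil.mpr hn] at he
      rw [Walk.penultimate_cons_of_not_nil h q hnil]
      exact .inr (hq.eq_penultimate_of_mem_edges he).symm

theorem Walk.IsCycle.exists_edges_eq_cons {c : G.Walk u u} (hc : c.IsCycle) (hv : c.snd = v) :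
    ∃ q : G.Walk v u, q.IsPath ∧ s(u, v) ∉ q.edges ∧ c.edges = s(u, v) :: q.edges := by
  cases c with
  | nil => exact (hc.ne_nil rfl).elim
  | cons h q =>
    rw [Walk.snd_cons] at hv
    subst hv
    obtain ⟨hq, hqe⟩ := (Walk.cons_isCycle_iff q h).mp hc
    exact ⟨q, hq, hqe, rfl⟩

theorem Walk.IsCycle.exists_isPath_isRotated {x : V} {c : G.Walk x x} (hc : c.IsCycle)
    (he : s(u, v) ∈ c.edges) :
    ∃ (a b : V) (r : G.Walk a b), s(a, b) = s(u, v) ∧ r.IsPath ∧ s(u, v) ∉ r.edges ∧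
      c.edges ~r s(u, v) :: r.edges := by
  have hu : u ∈ c.support := c.fst_mem_support_of_mem_edges he
  set d := c.rotate u hu
  have hd : d.IsCycle := hc.rotate hu
  have hrot : c.edges ~r d.edges := (c.rotate_edges u hu).symm
  rcases hd.snd_eq_or_penultimate_eq ((c.rotate_edges u hu).mem_iff.mpr he) with hv | hv
  · obtain ⟨q, hq, hqe, hdq⟩ := hd.exists_edges_eq_cons hv
    exact ⟨v, u, q, Sym2.eq_swap, hq, hqe, hdq ▸ hrot⟩
  · obtain ⟨q, hq, hqe, hdq⟩ :=
      hd.reverse.exists_edges_eq_cons (v := v) (by rwa [Walk.snd_reverse])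
    refine ⟨u, v, q.reverse, rfl, hq.reverse, by simpa [Walk.edges_reverse] using hqe, ?_⟩
    have hdq' : d.edges = q.reverse.edges ++ [s(u, v)] := by
      rw [← List.reverse_reverse d.edges, ← Walk.edges_reverse, hdq]
      simp [Walk.edges_reverse]
    exact hrot.trans (hdq' ▸ List.isRotated_append)

theorem Walk.IsPath.sum_map_flip_modEq [DecidableEq V] {w : Sym2 V → ℕ} (hw : ∀ f, w f ≤ 1)
    {r : G.Walk a b} (hr : r.IsPath) (hab : a ≠ b) (hu : u = a ∨ u = b) (e : Sym2 V) :
    (r.edges.map fun f => if w e = 1 ∧ u ∈ f then 1 - w f else w f).sum ≡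
      ((e :: r.edges).map w).sum [MOD 2] := by
  have hcount : r.edges.countP (fun f => w e = 1 ∧ u ∈ f) = w e := by
    have hendpoint : r.edges.countP (u ∈ ·) = 1 := by
      rcases hu with rfl | rfl
      exacts [hr.countP_start_mem_edges hab, hr.countP_end_mem_edges hab]
    rcases Nat.le_one_iff_eq_zero_or_eq_one.mp (hw e) with h | h <;> simp [h, hendpoint]
  have := List.sum_map_ite_sub_modEq (fun f => w e = 1 ∧ u ∈ f) w r.edges fun f _ => hw f
  rwa [hcount, add_comm, ← List.sum_cons, ← List.map_cons] at this

end SimpleGraph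

namespace PerfM

variable {V : Type*} {G : SimpleGraph V} {e f : Sym2 V} {x : V}

theorem eq_of_mem {M : Set (Sym2 V)} (hM : PerfM G M) (hf : f ∈ M) (he : e ∈ M) (hxf : x ∈ f)
    (hxe : x ∈ e) : f = e :=
  (hM.2 x).unique ⟨hf, hxf⟩ ⟨he, hxe⟩

variable [DecidableEq V] {M : Finset (Sym2 V)}

theorem forall_mem_erase_not_mem_iff (hM : PerfM G ↑M) (he : e ∈ M) :
    (∀ f ∈ M.erase e, x ∉ f) ↔ x ∈ e := by
  constructor
  · intro hx
    obtain ⟨f, ⟨hf, hxf⟩, -⟩ := hM.2 x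
    by_contra hxe
    exact hx f (Finset.mem_erase.mpr ⟨fun hfe => hxe (hfe ▸ hxf), hf⟩) hxf
  · intro hxe f hf hxf
    exact (Finset.mem_erase.mp hf).1 (hM.eq_of_mem (Finset.mem_erase.mp hf).2 he hxf hxe)

theorem cycleChain_cons_edges_iff {a b : V} (hM : PerfM G ↑M) (he : e ∈ M) (hab : s(a, b) = e)
    {r : G.Walk a b} (hr : e ∉ r.edges) :
    Cycle.Chain (fun f g => f ∈ (M : Set (Sym2 V)) ↔ g ∉ (M : Set (Sym2 V)))
        ↑(e :: r.edges) ↔ AltList ↑(M.erase e) r.edges := by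
  have hne : r.edges ≠ [] := by
    intro h
    have hba : a = b := (SimpleGraph.Walk.edges_eq_nil.mp h).eq
    subst hba
    exact (G.mem_edgeSet.mp (hab ▸ hM.1 he)).ne rfl
  have hhead : r.edges.head hne ∉ (M : Set (Sym2 V)) := fun hm =>
    hr (hM.eq_of_mem hm he (by simp [SimpleGraph.Walk.head_edges_eq_mk_start_snd])
      (hab ▸ Sym2.mem_mk_left a b) ▸ List.head_mem hne)
  have hlast : r.edges.getLast hne ∉ (M : Set (Sym2 V)) := fun hm =>
    hr (hM.eq_of_mem hm he (by simp [SimpleGraph.Walk.getLast_edges_eq_mk_penultimate_end])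
      (hab ▸ Sym2.mem_mk_right a b) ▸ List.getLast_mem hne)
  rw [Cycle.chain_coe_cons_iff _ _ hne]
  simp only [hhead, hlast, Finset.mem_coe.mpr he, not_true, not_false_iff, true_and, and_true]
  exact altList_iff_of_forall_mem fun f hf => by simp [ne_of_mem_of_not_mem hf hr]

end PerfM

section Reduction

open SimpleGraph

variable {V : Type*} [DecidableEq V] {G : SimpleGraph V} {w : Sym2 V → ℕ} {M : Finset (Sym2 V)}
  {u v : V}

theorem PerfM.exists_augmenting_of_altCycle (hw : ∀ e, w e ≤ 1) (hM : PerfM G ↑M)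
    (he : s(u, v) ∈ M) {x : V} {c : G.Walk x x} (hc : AltCycle G ↑M c)
    (hodd : Odd ((c.edges.map w).sum)) (hmem : s(u, v) ∈ c.edges) :
    ∃ (a b : V) (p : (G.deleteEdges {s(u, v)}).Walk a b), a ≠ b ∧ p.IsPath ∧
      AltList ↑(M.erase s(u, v)) p.edges ∧ (∀ e ∈ M.erase s(u, v), a ∉ e) ∧
      (∀ e ∈ M.erase s(u, v), b ∉ e) ∧
      Odd ((p.edges.map fun f => if w s(u, v) = 1 ∧ u ∈ f then 1 - w f else w f).sum) := by
  obtain ⟨hcyc, hchain⟩ := altCycle_iff.mp hc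
  obtain ⟨a, b, r, hab, hr, hre, hrot⟩ := hcyc.exists_isPath_isRotated hmem
  have hne : a ≠ b := (G.mem_edgeSet.mp (hab ▸ hM.1 he)).ne
  have hrG' : ∀ f ∈ r.edges, f ∈ (G.deleteEdges {s(u, v)}).edgeSet := fun f hf => by
    simp [edgeSet_deleteEdges, r.edges_subset_edgeSet hf, ne_of_mem_of_not_mem hf hre]
  have hu : u = a ∨ u = b := Sym2.mem_iff.mp (hab ▸ Sym2.mem_mk_left u v)
  refine ⟨a, b, r.transfer _ hrG', hne, hr.transfer hrG', ?_,
    (hM.forall_mem_erase_not_mem_iff he).mpr (hab ▸ Sym2.mem_mk_left a b),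
    (hM.forall_mem_erase_not_mem_iff he).mpr (hab ▸ Sym2.mem_mk_right a b), ?_⟩
  · rw [r.edges_transfer]
    exact (hM.cycleChain_cons_edges_iff he hab hre).mp (Cycle.coe_eq_coe.mpr hrot ▸ hchain)
  · rw [r.edges_transfer, Nat.odd_iff, hr.sum_map_flip_modEq hw hne hu, ← Nat.odd_iff,
      ← (hrot.perm.map w).sum_eq]
    exact hodd

theorem PerfM.exists_altCycle_of_augmenting (hw : ∀ e, w e ≤ 1) (hM : PerfM G ↑M)
    (he : s(u, v) ∈ M) {a b : V} {p : (G.deleteEdges {s(u, v)}).Walk a b} (hne : a ≠ b)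
    (hp : p.IsPath) (halt : AltList ↑(M.erase s(u, v)) p.edges)
    (ha : ∀ e ∈ M.erase s(u, v), a ∉ e) (hb : ∀ e ∈ M.erase s(u, v), b ∉ e)
    (hodd : Odd ((p.edges.map fun f => if w s(u, v) = 1 ∧ u ∈ f then 1 - w f else w f).sum)) :
    ∃ (x : V) (c : G.Walk x x), AltCycle G ↑M c ∧ Odd ((c.edges.map w).sum) ∧
      s(u, v) ∈ c.edges := by
  have hab : s(a, b) = s(u, v) := ((Sym2.mem_and_mem_iff hne).mp
    ⟨(hM.forall_mem_erase_not_mem_iff he).mp ha,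
      (hM.forall_mem_erase_not_mem_iff he).mp hb⟩).symm
  have hpG : ∀ f ∈ p.edges, f ∈ G.edgeSet := fun f hf =>
    edgeSet_mono (G.deleteEdges_le _) (p.edges_subset_edgeSet hf)
  set r := p.transfer G hpG
  have hre : s(u, v) ∉ r.edges := fun h => by
    have := p.edges_subset_edgeSet (p.edges_transfer hpG ▸ h)
    simp [edgeSet_deleteEdges] at this
  have hba : G.Adj b a := (G.mem_edgeSet.mp (hab ▸ hM.1 he)).symm
  have hcons : (Walk.cons hba r).edges = s(u, v) :: r.edges := by
    rw [Walk.edges_cons, Sym2.eq_swap, hab]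
  have hu : u = a ∨ u = b := Sym2.mem_iff.mp (hab ▸ Sym2.mem_mk_left u v)
  refine ⟨b, Walk.cons hba r, altCycle_iff.mpr ⟨?_, ?_⟩, ?_, ?_⟩
  · exact (Walk.cons_isCycle_iff r hba).mpr ⟨hp.transfer hpG, by rwa [Sym2.eq_swap, hab]⟩
  · rw [hcons]
    exact (hM.cycleChain_cons_edges_iff he hab hre).mpr (by rwa [p.edges_transfer])
  · rw [hcons, Nat.odd_iff, ← (hp.transfer hpG).sum_map_flip_modEq hw hne hu, ← Nat.odd_iff,
      p.edges_transfer]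
    exact hodd
  · rw [hcons]
    exact List.mem_cons_self

end Reduction

/-- `G` has an `M`-alternating cycle of odd weight through `e = {u,v} ∈ M` iff
`G' = G - e` (with weights of edges at `u` flipped when `w e = 1`) has an
`M' = M \ {e}`-augmenting path of odd weight. -/
theorem stmt10 {V : Type*} [DecidableEq V] (G : SimpleGraph V)
    (w : Sym2 V → ℕ) (hw : ∀ e, w e ≤ 1)
    (M : Finset (Sym2 V)) (hM : PerfM G ↑M)
    (u v : V) (he : s(u, v) ∈ M) :
    let G' := G.deleteEdges {s(u, v)}
    let M' := M.erase s(u, v)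
    let w' : Sym2 V → ℕ := fun f => if w s(u, v) = 1 ∧ u ∈ f then 1 - w f else w f
    ((∃ (x : V) (c : G.Walk x x), AltCycle G ↑M c ∧ Odd ((c.edges.map w).sum) ∧
        s(u, v) ∈ c.edges) ↔
      (∃ (a b : V) (p : G'.Walk a b), a ≠ b ∧ p.IsPath ∧ AltList ↑M' p.edges ∧
        (∀ e ∈ M', a ∉ e) ∧ (∀ e ∈ M', b ∉ e) ∧ Odd ((p.edges.map w').sum))) := by
  intro G' M' w'
  constructor
  · rintro ⟨x, c, hc, hodd, hmem⟩
    exact hM.exists_augmenting_of_altCycle hw he hc hodd hmem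
  · rintro ⟨a, b, p, hne, hp, halt, ha, hb, hodd⟩
    exact hM.exists_altCycle_of_augmenting hw he hne hp halt ha hb hodd
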